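/- For every bounded set R ⊆ ℂ₊ with inf_{z ∈ R} |Re z| > 0 (i.e. R lies at a positive distance from the imaginary axis), sup_{z ∈ R} |δ(z)| < ∞ and sup_{z ∈ R} |δ̃(z)| < ∞. -/

import Mathlib

/-!
Write `g_w(t) = t / (1 + w t)`, so that the equations read `-z δ = c ∫ g_δ̃ dν` and
`-z δ̃ = ∫ g_δ dν̃`. Taking imaginary parts and using `ν ≥ 0` gives `c A B ≤ |z|²` for the second
moments `A = ∫ |g_δ̃|² dν`, `B = ∫ |g_δ|² dν̃`; with Cauchy–Schwarz this yields the energy bounds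
`|δ|² B ≤ c`, `|δ̃|² A ≤ 1 / c` and `|z| |δ| |δ̃| ≤ √c`. Now compare the two expressions of
`-z δ δ̃ = c δ̃ ∫ g_δ̃ dν = δ ∫ g_δ dν̃`. If `|δ|` were large while `|z| ≥ ε`, then `δ̃` would be
small, and the energy bounds (which make `w t / (1 + w t)` uniformly square integrable) force
`δ̃ ∫ g_δ̃ dν → 0` and `δ ∫ g_δ dν̃ → ν̃(ℝ \ {0}) > 0`, a contradiction. The bound on `δ̃` is the
same argument with the two measures exchanged.
-/

open MeasureTheory Set Filter Topology

noncomputable section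

/-- The open upper half plane of `ℂ`. -/
def UpperHalf : Set ℂ := {z : ℂ | 0 < z.im}

/-- `(d, dt)` is a solution in `ℂ₊ × ℂ₊` of the master system of equations at the point `z`. -/
def IsPair (ν νt : Measure ℝ) (c : ℝ) (z d dt : ℂ) : Prop :=
  d ∈ UpperHalf ∧ dt ∈ UpperHalf ∧
  d = (c : ℂ) * ∫ t, (t : ℂ) / (-z * (1 + dt * (t : ℂ))) ∂ν ∧
  dt = ∫ t, (t : ℂ) / (-z * (1 + d * (t : ℂ))) ∂νt

theorem one_half_le_norm_one_add {R : Type*} [SeminormedRing R] [NormOneClass R] {x : R}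
    (hx : ‖x‖ ≤ 1 / 2) : 1 / 2 ≤ ‖1 + x‖ := by
  have := norm_sub_norm_le (1 : R) (-x)
  rw [norm_one, norm_neg, sub_neg_eq_add] at this
  linarith

theorem half_norm_le_norm_one_add {R : Type*} [SeminormedRing R] [NormOneClass R] {x : R}
    (hx : 2 ≤ ‖x‖) : ‖x‖ / 2 ≤ ‖1 + x‖ := by
  have := norm_sub_norm_le x (-1)
  rw [norm_neg, norm_one, sub_neg_eq_add, add_comm] at this
  linarith

theorem setIntegral_norm_le_sqrt {α E : Type*} [MeasurableSpace α] [NormedAddCommGroup E]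
    {μ : Measure α} [IsFiniteMeasure μ] {f : α → E} (hf : AEStronglyMeasurable f μ)
    (hf2 : Integrable (fun x ↦ ‖f x‖ ^ 2) μ) (A : Set α) :
    ∫ x in A, ‖f x‖ ∂μ ≤ √(μ.real A * ∫ x, ‖f x‖ ^ 2 ∂μ) := by
  have hmem : MemLp (fun x ↦ ‖f x‖) (ENNReal.ofReal 2) (μ.restrict A) := by
    rw [ENNReal.ofReal_ofNat, memLp_two_iff_integrable_sq hf.norm.restrict]
    exact hf2.restrict
  have holder := integral_mul_le_Lp_mul_Lq_of_nonneg Real.HolderConjugate.two_two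
    (.of_forall fun _ ↦ zero_le_one) (.of_forall fun x ↦ norm_nonneg (f x))
    (memLp_const (1 : ℝ)) hmem
  simp only [one_mul, one_pow, Real.rpow_two, integral_const, smul_eq_mul, mul_one,
    measureReal_restrict_apply_univ] at holder
  rw [Real.sqrt_mul measureReal_nonneg, Real.sqrt_eq_rpow, Real.sqrt_eq_rpow]
  refine holder.trans (mul_le_mul_of_nonneg_left ?_ (by positivity))
  exact Real.rpow_le_rpow (integral_nonneg fun _ ↦ by positivity)
    (setIntegral_le_integral hf2 (.of_forall fun _ ↦ by positivity)) (by norm_num)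

theorem norm_integral_le_sqrt {α E : Type*} [MeasurableSpace α] [NormedAddCommGroup E]
    [NormedSpace ℝ E] {μ : Measure α} [IsProbabilityMeasure μ] {f : α → E}
    (hf : AEStronglyMeasurable f μ) (hf2 : Integrable (fun x ↦ ‖f x‖ ^ 2) μ) :
    ‖∫ x, f x ∂μ‖ ≤ √(∫ x, ‖f x‖ ^ 2 ∂μ) := by
  simpa using (norm_integral_le_integral_norm f).trans (setIntegral_norm_le_sqrt hf hf2 univ)

theorem measureReal_compl_singleton_pos {α : Type*} [MeasurableSpace α]
    [MeasurableSingletonClass α] {μ : Measure α} [IsProbabilityMeasure μ] {a : α}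
    (h : μ ≠ Measure.dirac a) : 0 < μ.real {a}ᶜ := by
  refine measureReal_nonneg.lt_of_ne fun h0 ↦ h ?_
  have hnull : μ {a}ᶜ = 0 := (measureReal_eq_zero_iff (measure_ne_top _ _)).mp h0.symm
  calc μ = μ.restrict {a} := (Measure.restrict_eq_self_of_ae_mem (ae_iff.mpr hnull)).symm
    _ = Measure.dirac a := by
      rw [Measure.restrict_singleton,
        (prob_compl_eq_zero_iff (measurableSet_singleton a)).mp hnull, one_smul]

theorem tendsto_measureReal_lt_abs_atTop (μ : Measure ℝ) [IsFiniteMeasure μ] :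
    Tendsto (fun s ↦ μ.real {t | s < |t|}) atTop (𝓝 0) := by
  have h := tendsto_measure_iInter_atTop (μ := μ) (s := fun s : ℝ ↦ {t | s < |t|})
    (fun _ ↦ (measurableSet_lt measurable_const measurable_abs).nullMeasurableSet)
    (fun _ _ hab _ ht ↦ hab.trans_lt ht) ⟨0, measure_ne_top _ _⟩
  have hempty : (⋂ s : ℝ, {t : ℝ | s < |t|}) = ∅ :=
    eq_empty_of_forall_notMem fun t ht ↦ lt_irrefl |t| (mem_iInter.mp ht |t|)
  rw [hempty, measure_empty] at h
  exact (ENNReal.tendsto_toReal ENNReal.zero_ne_top).comp h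

theorem tendsto_measureReal_abs_le_nhdsGT (μ : Measure ℝ) [IsFiniteMeasure μ] :
    Tendsto (fun s ↦ μ.real {t | t ≠ 0 ∧ |t| ≤ s}) (𝓝[>] 0) (𝓝 0) := by
  have h := tendsto_measure_biInter_gt (μ := μ) (s := fun s : ℝ ↦ {t | t ≠ 0 ∧ |t| ≤ s}) (a := 0)
    (fun _ _ ↦ ((measurableSet_singleton 0).compl.inter
      (measurableSet_le measurable_abs measurable_const)).nullMeasurableSet)
    (fun _ _ _ hij _ ht ↦ ⟨ht.1, ht.2.trans hij⟩) ⟨1, one_pos, measure_ne_top _ _⟩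
  have hempty : (⋂ s > (0 : ℝ), {t : ℝ | t ≠ 0 ∧ |t| ≤ s}) = ∅ := by
    refine eq_empty_of_forall_notMem fun t ht ↦ ?_
    rw [mem_iInter₂] at ht
    have ht0 := (ht 1 one_pos).1
    exact (half_lt_self (abs_pos.mpr ht0)).not_ge (ht _ (by positivity)).2
  rw [hempty, measure_empty] at h
  exact (ENNReal.tendsto_toReal ENNReal.zero_ne_top).comp h

section Kernel

variable {w : ℂ}

theorem abs_mul_im_le_norm_one_add_mul (hw : 0 < w.im) (t : ℝ) : |t| * w.im ≤ ‖1 + w * t‖ := by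
  calc |t| * w.im = |(1 + w * t).im| := by simp [abs_mul, abs_of_pos hw, mul_comm]
    _ ≤ ‖1 + w * t‖ := Complex.abs_im_le_norm _

theorem one_add_mul_ofReal_ne_zero (hw : 0 < w.im) (t : ℝ) : 1 + w * t ≠ 0 := by
  rcases eq_or_ne t 0 with rfl | ht
  · simp
  · exact norm_pos_iff.mp <|
      (mul_pos (abs_pos.mpr ht) hw).trans_le (abs_mul_im_le_norm_one_add_mul hw t)

theorem norm_ofReal_div_one_add_mul_le (hw : 0 < w.im) (t : ℝ) :
    ‖(t : ℂ) / (1 + w * t)‖ ≤ 1 / w.im := by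
  rcases eq_or_ne t 0 with rfl | ht
  · simp [hw.le]
  rw [norm_div, Complex.norm_real, Real.norm_eq_abs,
    div_le_div_iff₀ (norm_pos_iff.mpr (one_add_mul_ofReal_ne_zero hw t)) hw, one_mul]
  exact abs_mul_im_le_norm_one_add_mul hw t

theorem norm_ofReal_div_one_add_mul_le_two_mul_abs {t : ℝ} (hwt : ‖w‖ * |t| ≤ 1 / 2) :
    ‖(t : ℂ) / (1 + w * t)‖ ≤ 2 * |t| := by
  have h := one_half_le_norm_one_add (x := w * t) (by simpa using hwt)
  rw [norm_div, Complex.norm_real, Real.norm_eq_abs, div_le_iff₀ (by linarith)]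
  nlinarith [abs_nonneg t]

theorem norm_mul_ofReal_div_one_add_mul_sub_one_le {t : ℝ} (hwt : 2 ≤ ‖w‖ * |t|) :
    ‖w * ((t : ℂ) / (1 + w * t)) - 1‖ ≤ 2 / (‖w‖ * |t|) := by
  have hnorm : ‖w * (t : ℂ)‖ = ‖w‖ * |t| := by simp
  have h := half_norm_le_norm_one_add (x := w * t) (hnorm ▸ hwt)
  rw [hnorm] at h
  have hne : 1 + w * t ≠ 0 := norm_pos_iff.mp (by linarith)
  have heq : w * ((t : ℂ) / (1 + w * t)) - 1 = -(1 + w * t)⁻¹ := by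
    field_simp
    ring
  rw [heq, norm_neg, norm_inv, ← inv_div]
  exact inv_anti₀ (by linarith) h

theorem im_ofReal_div_one_add_mul (hw : 0 < w.im) (t : ℝ) :
    ((t : ℂ) / (1 + w * t)).im = -w.im * ‖(t : ℂ) / (1 + w * t)‖ ^ 2 := by
  have h := Complex.normSq_pos.mpr (one_add_mul_ofReal_ne_zero hw t)
  rw [Complex.div_im, norm_div, div_pow, Complex.sq_norm, Complex.sq_norm, Complex.normSq_ofReal]
  simp only [Complex.ofReal_im, Complex.ofReal_re, Complex.add_im, Complex.mul_im]
  field_simp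
  simp
  ring

variable (μ : Measure ℝ) [IsFiniteMeasure μ]

theorem integrable_ofReal_div_one_add_mul (hw : 0 < w.im) :
    Integrable (fun t : ℝ ↦ (t : ℂ) / (1 + w * t)) μ :=
  .of_bound (by fun_prop : Measurable _).aestronglyMeasurable (1 / w.im)
    (.of_forall (norm_ofReal_div_one_add_mul_le hw))

theorem integrable_norm_ofReal_div_one_add_mul_sq (hw : 0 < w.im) :
    Integrable (fun t : ℝ ↦ ‖(t : ℂ) / (1 + w * t)‖ ^ 2) μ :=
  .of_bound (by fun_prop : Measurable _).aestronglyMeasurable ((1 / w.im) ^ 2) <|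
    .of_forall fun t ↦ by
      rw [norm_pow, norm_norm]
      exact pow_le_pow_left₀ (norm_nonneg _) (norm_ofReal_div_one_add_mul_le hw t) 2

theorem im_integral_ofReal_div_one_add_mul (hw : 0 < w.im) :
    (∫ t, (t : ℂ) / (1 + w * t) ∂μ).im = -w.im * ∫ t, ‖(t : ℂ) / (1 + w * t)‖ ^ 2 ∂μ := by
  rw [← integral_const_mul, ← integral_congr_ae (.of_forall (im_ofReal_div_one_add_mul hw))]
  exact (integral_im (integrable_ofReal_div_one_add_mul μ hw)).symm

theorem norm_mul_setIntegral_norm_le_sqrt (hw : 0 < w.im) {L : ℝ}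
    (hL : ‖w‖ ^ 2 * ∫ t, ‖(t : ℂ) / (1 + w * t)‖ ^ 2 ∂μ ≤ L) (A : Set ℝ) :
    ‖w‖ * ∫ t in A, ‖(t : ℂ) / (1 + w * t)‖ ∂μ ≤ √(μ.real A * L) := by
  have hCS := setIntegral_norm_le_sqrt (integrable_ofReal_div_one_add_mul μ hw).1
    (integrable_norm_ofReal_div_one_add_mul_sq μ hw) A
  calc ‖w‖ * ∫ t in A, ‖(t : ℂ) / (1 + w * t)‖ ∂μ
      ≤ √(‖w‖ ^ 2) * √(μ.real A * ∫ t, ‖(t : ℂ) / (1 + w * t)‖ ^ 2 ∂μ) := by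
        rw [Real.sqrt_sq (norm_nonneg w)]
        exact mul_le_mul_of_nonneg_left hCS (norm_nonneg w)
    _ = √(μ.real A * (‖w‖ ^ 2 * ∫ t, ‖(t : ℂ) / (1 + w * t)‖ ^ 2 ∂μ)) := by
        rw [← Real.sqrt_mul (sq_nonneg _), mul_left_comm]
    _ ≤ √(μ.real A * L) := Real.sqrt_le_sqrt (mul_le_mul_of_nonneg_left hL measureReal_nonneg)

theorem norm_mul_setIntegral_sub_measureReal_le (hw : 0 < w.im) {L : ℝ}
    (hL : ‖w‖ ^ 2 * ∫ t, ‖(t : ℂ) / (1 + w * t)‖ ^ 2 ∂μ ≤ L) (A : Set ℝ) :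
    ‖w * ∫ t in A, (t : ℂ) / (1 + w * t) ∂μ - μ.real A‖ ≤ √(μ.real A * L) + μ.real A := by
  refine (norm_sub_le _ _).trans (add_le_add ?_ (by simp [abs_of_nonneg measureReal_nonneg]))
  rw [norm_mul]
  exact (mul_le_mul_of_nonneg_left (norm_integral_le_integral_norm _) (norm_nonneg w)).trans
    (norm_mul_setIntegral_norm_le_sqrt μ hw hL A)

theorem norm_mul_integral_le (hw : 0 < w.im) {L : ℝ}
    (hL : ‖w‖ ^ 2 * ∫ t, ‖(t : ℂ) / (1 + w * t)‖ ^ 2 ∂μ ≤ L) {s : ℝ} (hs : 0 ≤ s)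
    (hws : ‖w‖ * s ≤ 1 / 2) :
    ‖w * ∫ t, (t : ℂ) / (1 + w * t) ∂μ‖
      ≤ √(μ.real {t | s < |t|} * L) + ‖w‖ * (2 * s * μ.real univ) := by
  set S := {t : ℝ | s < |t|}
  have hnear : ∀ t ∈ Sᶜ, ‖(t : ℂ) / (1 + w * t)‖ ≤ 2 * s := fun t ht ↦ by
    have hts : |t| ≤ s := not_lt.mp ht
    exact (norm_ofReal_div_one_add_mul_le_two_mul_abs
      ((mul_le_mul_of_nonneg_left hts (norm_nonneg w)).trans hws)).trans (by linarith)
  have hnear_int : ‖∫ t in Sᶜ, (t : ℂ) / (1 + w * t) ∂μ‖ ≤ 2 * s * μ.real univ :=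
    (norm_setIntegral_le_of_norm_le_const (measure_lt_top μ Sᶜ) hnear).trans
      (mul_le_mul_of_nonneg_left (measureReal_mono (subset_univ _)) (by positivity))
  have htail_int : ‖w‖ * ‖∫ t in S, (t : ℂ) / (1 + w * t) ∂μ‖ ≤ √(μ.real S * L) :=
    (mul_le_mul_of_nonneg_left (norm_integral_le_integral_norm _) (norm_nonneg w)).trans
      (norm_mul_setIntegral_norm_le_sqrt μ hw hL S)
  rw [← integral_add_compl (measurableSet_lt measurable_const measurable_abs)
    (integrable_ofReal_div_one_add_mul μ hw), norm_mul]
  refine (mul_le_mul_of_nonneg_left (norm_add_le _ _) (norm_nonneg w)).trans ?_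
  rw [mul_add]
  exact add_le_add htail_int (mul_le_mul_of_nonneg_left hnear_int (norm_nonneg w))

theorem exists_norm_mul_integral_le_of_norm_le (L : ℝ) {η : ℝ} (hη : 0 < η) :
    ∃ δ > 0, ∀ w : ℂ, 0 < w.im → ‖w‖ ≤ δ →
      ‖w‖ ^ 2 * ∫ t, ‖(t : ℂ) / (1 + w * t)‖ ^ 2 ∂μ ≤ L →
      ‖w * ∫ t, (t : ℂ) / (1 + w * t) ∂μ‖ ≤ η := by
  have htail : Tendsto (fun s ↦ √(μ.real {t | s < |t|} * L)) atTop (𝓝 0) := by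
    simpa using ((tendsto_measureReal_lt_abs_atTop μ).mul_const L).sqrt
  obtain ⟨s, hs_tail, hs : 0 < s⟩ :=
    ((htail.eventually (ge_mem_nhds (half_pos hη))).and (eventually_gt_atTop 0)).exists
  have hnear : Tendsto (fun d ↦ d * (2 * s * μ.real univ)) (𝓝[>] 0) (𝓝 0) := by
    have h := (tendsto_id (x := 𝓝 (0 : ℝ))).mul_const (2 * s * μ.real univ)
    rw [zero_mul] at h
    exact h.mono_left nhdsWithin_le_nhds
  have hδs : ∀ᶠ d in 𝓝[>] (0 : ℝ), d ≤ 1 / (2 * s) :=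
    eventually_nhdsWithin_of_eventually_nhds (eventually_le_nhds (by positivity))
  obtain ⟨δ, ⟨hδ_near, hδs⟩, hδ : 0 < δ⟩ :=
    (((hnear.eventually (ge_mem_nhds (half_pos hη))).and hδs).and self_mem_nhdsWithin).exists
  refine ⟨δ, hδ, fun w hw hwδ hL ↦ ?_⟩
  have hws : ‖w‖ * s ≤ 1 / 2 :=
    calc ‖w‖ * s ≤ 1 / (2 * s) * s := by gcongr; exact hwδ.trans hδs
      _ = 1 / 2 := by field_simp
  have hwδ' : ‖w‖ * (2 * s * μ.real univ) ≤ δ * (2 * s * μ.real univ) := by gcongr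
  linarith [norm_mul_integral_le μ hw hL hs.le hws]

theorem norm_mul_integral_sub_measureReal_le (hw : 0 < w.im) {L : ℝ}
    (hL : ‖w‖ ^ 2 * ∫ t, ‖(t : ℂ) / (1 + w * t)‖ ^ 2 ∂μ ≤ L) {s : ℝ} (hws : 2 ≤ ‖w‖ * s) :
    ‖w * ∫ t, (t : ℂ) / (1 + w * t) ∂μ - μ.real {0}ᶜ‖
      ≤ √(μ.real {t | t ≠ 0 ∧ |t| ≤ s} * L) + μ.real {t | t ≠ 0 ∧ |t| ≤ s}
        + 2 / (‖w‖ * s) * μ.real univ := by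
  set S := {t : ℝ | t ≠ 0 ∧ |t| ≤ s}
  have hS : MeasurableSet S :=
    (measurableSet_singleton 0).compl.inter (measurableSet_le measurable_abs measurable_const)
  -- `D` vanishes at `0` and is small away from `0` when `w` is large.
  set D : ℝ → ℂ := fun t ↦ w * ((t : ℂ) / (1 + w * t)) - ({0}ᶜ : Set ℝ).indicator (fun _ ↦ 1) t
  have hg := (integrable_ofReal_div_one_add_mul μ hw).const_mul w
  have h1 : Integrable (fun t ↦ ({0}ᶜ : Set ℝ).indicator (fun _ ↦ (1 : ℂ)) t) μ :=
    (integrable_const 1).indicator (measurableSet_singleton 0).compl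
  have hint : ∫ t, D t ∂μ = w * ∫ t, (t : ℂ) / (1 + w * t) ∂μ - μ.real {0}ᶜ := by
    rw [integral_sub hg h1, integral_const_mul,
      integral_indicator_const _ (measurableSet_singleton 0).compl, Complex.real_smul, mul_one]
  have hnear_int : ‖∫ t in S, D t ∂μ‖ ≤ √(μ.real S * L) + μ.real S := by
    rw [setIntegral_congr_fun hS (g := fun t : ℝ ↦ w * ((t : ℂ) / (1 + w * t)) - 1)
      (fun t ht ↦ by simp [D, ht.1]), integral_sub hg.integrableOn (integrable_const _),
      integral_const_mul, setIntegral_const, Complex.real_smul, mul_one]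
    exact norm_mul_setIntegral_sub_measureReal_le μ hw hL S
  have hfar : ∀ t ∈ Sᶜ, ‖D t‖ ≤ 2 / (‖w‖ * s) := fun t ht ↦ by
    rcases eq_or_ne t 0 with rfl | ht0
    · simp [D]; positivity
    have hts : ‖w‖ * s ≤ ‖w‖ * |t| :=
      mul_le_mul_of_nonneg_left (by simpa [S, ht0] using ht : s < |t|).le (norm_nonneg w)
    simp only [D, indicator_of_mem (show t ∈ ({0}ᶜ : Set ℝ) from ht0)]
    exact (norm_mul_ofReal_div_one_add_mul_sub_one_le (hws.trans hts)).trans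
      (div_le_div_of_nonneg_left zero_le_two (by linarith) hts)
  have hfar_int : ‖∫ t in Sᶜ, D t ∂μ‖ ≤ 2 / (‖w‖ * s) * μ.real univ :=
    (norm_setIntegral_le_of_norm_le_const (measure_lt_top μ Sᶜ) hfar).trans
      (mul_le_mul_of_nonneg_left (measureReal_mono (subset_univ _)) (by positivity))
  rw [← hint, ← integral_add_compl hS (show Integrable D μ from hg.sub h1)]
  exact (norm_add_le _ _).trans (add_le_add hnear_int hfar_int)

theorem exists_norm_mul_integral_sub_le_of_le_norm (L : ℝ) {η : ℝ} (hη : 0 < η) :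
    ∃ R, ∀ w : ℂ, 0 < w.im → R ≤ ‖w‖ →
      ‖w‖ ^ 2 * ∫ t, ‖(t : ℂ) / (1 + w * t)‖ ^ 2 ∂μ ≤ L →
      ‖w * ∫ t, (t : ℂ) / (1 + w * t) ∂μ - μ.real {0}ᶜ‖ ≤ η := by
  have hnear : Tendsto (fun s ↦ √(μ.real {t | t ≠ 0 ∧ |t| ≤ s} * L)
      + μ.real {t | t ≠ 0 ∧ |t| ≤ s}) (𝓝[>] 0) (𝓝 0) := by
    have h := tendsto_measureReal_abs_le_nhdsGT μ
    simpa using (h.mul_const L).sqrt.add h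
  obtain ⟨s, hs_near, hs : 0 < s⟩ :=
    ((hnear.eventually (ge_mem_nhds (half_pos hη))).and self_mem_nhdsWithin).exists
  have hfar : Tendsto (fun r ↦ 2 / (r * s) * μ.real univ) atTop (𝓝 0) := by
    simpa using (tendsto_const_nhds.div_atTop (tendsto_id.atTop_mul_const hs)).mul_const
      (μ.real univ)
  obtain ⟨R, hR⟩ := eventually_atTop.mp
    ((hfar.eventually (ge_mem_nhds (half_pos hη))).and (eventually_ge_atTop (2 / s)))
  refine ⟨R, fun w hw hwR hL ↦ ?_⟩
  obtain ⟨hw_far, hws⟩ := hR ‖w‖ hwR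
  rw [div_le_iff₀ hs] at hws
  linarith [norm_mul_integral_sub_measureReal_le μ hw hL hws]

end Kernel

theorem im_mul_integral_norm_sq_le (μ : Measure ℝ) [IsFiniteMeasure μ] (hμ : μ (Iio 0) = 0)
    {z w : ℂ} (hz : 0 < z.im) (hw : 0 < w.im) :
    (z * w).im * ∫ t, ‖(t : ℂ) / (1 + w * t)‖ ^ 2 ∂μ
      ≤ Complex.normSq z * (∫ t, (t : ℂ) / (-z * (1 + w * t)) ∂μ).im := by
  have hz0 : z ≠ 0 := fun h ↦ by simp [h] at hz
  have hpt : ∀ t : ℝ, Complex.normSq z * ((t : ℂ) / (-z * (1 + w * t))).im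
      - (z * w).im * ‖(t : ℂ) / (1 + w * t)‖ ^ 2 = z.im * (t / Complex.normSq (1 + w * t)) := by
    intro t
    have h1 := Complex.normSq_pos.mpr (one_add_mul_ofReal_ne_zero hw t)
    have h2 := Complex.normSq_pos.mpr hz0
    rw [Complex.div_im, norm_div, div_pow, Complex.sq_norm, Complex.sq_norm, Complex.normSq_ofReal,
      Complex.normSq_mul, Complex.normSq_neg]
    simp only [Complex.ofReal_im, Complex.ofReal_re, Complex.mul_im, Complex.mul_re,
      Complex.add_im, Complex.add_re, Complex.neg_im, Complex.neg_re]
    field_simp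
    simp
    ring
  have hint : Integrable (fun t : ℝ ↦ (t : ℂ) / (-z * (1 + w * t))) μ := by
    simp_rw [div_mul_eq_div_div_swap]
    exact (integrable_ofReal_div_one_add_mul μ hw).div_const (-z)
  have him : ∫ t, ((t : ℂ) / (-z * (1 + w * t))).im ∂μ
      = (∫ t, (t : ℂ) / (-z * (1 + w * t)) ∂μ).im := integral_im hint
  have hnonneg : 0 ≤ ∫ t, z.im * (t / Complex.normSq (1 + w * t)) ∂μ := by
    refine integral_nonneg_of_ae ?_
    filter_upwards [measure_eq_zero_iff_ae_notMem.mp hμ] with t ht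
    exact mul_nonneg hz.le (div_nonneg (not_lt.mp ht) (Complex.normSq_nonneg _))
  rw [← integral_congr_ae (.of_forall hpt), integral_sub, integral_const_mul, integral_const_mul,
    him] at hnonneg
  · linarith
  · exact hint.im.const_mul _
  · exact (integrable_norm_ofReal_div_one_add_mul_sq μ hw).const_mul _

theorem integral_ofReal_div_neg_mul (μ : Measure ℝ) (z w : ℂ) :
    ∫ t, (t : ℂ) / (-z * (1 + w * t)) ∂μ = (∫ t, (t : ℂ) / (1 + w * t) ∂μ) / -z := by
  simp_rw [div_mul_eq_div_div_swap]
  exact integral_div _ _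

-- With `c₂ = 1` this is the system of `IsPair`; the second coefficient makes it symmetric.
def MasterSystem (μ μt : Measure ℝ) (c₁ c₂ : ℝ) (z u v : ℂ) : Prop :=
  u = (c₁ : ℂ) * ∫ t, (t : ℂ) / (-z * (1 + v * (t : ℂ))) ∂μ ∧
  v = (c₂ : ℂ) * ∫ t, (t : ℂ) / (-z * (1 + u * (t : ℂ))) ∂μt

namespace MasterSystem

variable {μ μt : Measure ℝ} {c₁ c₂ : ℝ} {z u v : ℂ}

theorem symm (h : MasterSystem μ μt c₁ c₂ z u v) : MasterSystem μt μ c₂ c₁ z v u :=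
  ⟨h.2, h.1⟩

theorem neg_mul_eq (h : MasterSystem μ μt c₁ c₂ z u v) (hz : z ≠ 0) :
    -z * u = c₁ * ∫ t, (t : ℂ) / (1 + v * t) ∂μ := by
  rw [h.1, integral_ofReal_div_neg_mul, mul_left_comm, mul_div_cancel₀ _ (neg_ne_zero.mpr hz)]

theorem norm_mul_integral_eq (h : MasterSystem μ μt c₁ c₂ z u v) (hc₁ : 0 ≤ c₁) (hc₂ : 0 ≤ c₂)
    (hz : z ≠ 0) :
    c₁ * ‖v * ∫ t, (t : ℂ) / (1 + v * t) ∂μ‖ = c₂ * ‖u * ∫ t, (t : ℂ) / (1 + u * t) ∂μt‖ := by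
  have heq : (c₁ : ℂ) * (v * ∫ t, (t : ℂ) / (1 + v * t) ∂μ)
      = c₂ * (u * ∫ t, (t : ℂ) / (1 + u * t) ∂μt) := by
    linear_combination v * (h.neg_mul_eq hz).symm - u * (h.symm.neg_mul_eq hz).symm
  have := congrArg norm heq
  rwa [norm_mul (c₁ : ℂ), norm_mul (c₂ : ℂ), Complex.norm_real, Complex.norm_real,
    Real.norm_of_nonneg hc₁, Real.norm_of_nonneg hc₂] at this

theorem norm_mul_le [IsProbabilityMeasure μ] (h : MasterSystem μ μt c₁ c₂ z u v) (hc₁ : 0 ≤ c₁)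
    (hz : z ≠ 0) (hv : 0 < v.im) :
    ‖z‖ * ‖u‖ ≤ c₁ * √(∫ t, ‖(t : ℂ) / (1 + v * t)‖ ^ 2 ∂μ) := by
  have h' := congrArg norm (h.neg_mul_eq hz)
  rw [norm_mul, norm_neg, norm_mul, Complex.norm_real, Real.norm_of_nonneg hc₁] at h'
  rw [h']
  exact mul_le_mul_of_nonneg_left (norm_integral_le_sqrt
    (integrable_ofReal_div_one_add_mul μ hv).1 (integrable_norm_ofReal_div_one_add_mul_sq μ hv)) hc₁

theorem mul_le_normSq [IsFiniteMeasure μ] [IsFiniteMeasure μt] (h : MasterSystem μ μt c₁ c₂ z u v)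
    (hμ : μ (Iio 0) = 0) (hc₁ : 0 ≤ c₁) (hz : 0 < z.im) (hu : 0 < u.im) (hv : 0 < v.im) :
    c₁ * c₂ * ((∫ t, ‖(t : ℂ) / (1 + v * t)‖ ^ 2 ∂μ) * ∫ t, ‖(t : ℂ) / (1 + u * t)‖ ^ 2 ∂μt)
      ≤ Complex.normSq z := by
  have hz0 : z ≠ 0 := fun h ↦ by simp [h] at hz
  have him_zv : (z * v).im = c₂ * u.im * ∫ t, ‖(t : ℂ) / (1 + u * t)‖ ^ 2 ∂μt := by
    have := congrArg Complex.im (h.symm.neg_mul_eq hz0)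
    rw [Complex.im_ofReal_mul, neg_mul, Complex.neg_im,
      im_integral_ofReal_div_one_add_mul μt hu] at this
    linarith
  have him_u : Complex.normSq z * u.im
      = c₁ * (Complex.normSq z * (∫ t, (t : ℂ) / (-z * (1 + v * t)) ∂μ).im) := by
    conv_lhs => rw [h.1, Complex.im_ofReal_mul]
    ring
  have key := mul_le_mul_of_nonneg_left (im_mul_integral_norm_sq_le μ hμ hz hv) hc₁
  rw [← him_u, him_zv] at key
  exact le_of_mul_le_mul_right (by linarith) hu

theorem sq_norm_mul_integral_le [IsProbabilityMeasure μ] (h : MasterSystem μ μt c₁ c₂ z u v)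
    (hc₁ : 0 < c₁) (hc₂ : 0 < c₂) (hz : z ≠ 0) (hv : 0 < v.im)
    (hN : c₁ * c₂ * ((∫ t, ‖(t : ℂ) / (1 + v * t)‖ ^ 2 ∂μ) * ∫ t, ‖(t : ℂ) / (1 + u * t)‖ ^ 2 ∂μt)
      ≤ Complex.normSq z) :
    ‖u‖ ^ 2 * ∫ t, ‖(t : ℂ) / (1 + u * t)‖ ^ 2 ∂μt ≤ c₁ / c₂ := by
  set A := ∫ t, ‖(t : ℂ) / (1 + v * t)‖ ^ 2 ∂μ
  set B := ∫ t, ‖(t : ℂ) / (1 + u * t)‖ ^ 2 ∂μt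
  have hA : 0 ≤ A := integral_nonneg fun _ ↦ by positivity
  have hB : 0 ≤ B := integral_nonneg fun _ ↦ by positivity
  have hzu : (‖z‖ * ‖u‖) ^ 2 ≤ c₁ ^ 2 * A := by
    have := pow_le_pow_left₀ (by positivity) (h.norm_mul_le hc₁.le hz hv) 2
    rwa [mul_pow c₁, Real.sq_sqrt hA] at this
  rw [Complex.normSq_eq_norm_sq] at hN
  rw [le_div_iff₀ hc₂, ← mul_le_mul_iff_of_pos_right (by positivity : 0 < ‖z‖ ^ 2)]
  calc ‖u‖ ^ 2 * B * c₂ * ‖z‖ ^ 2 = c₂ * B * (‖z‖ * ‖u‖) ^ 2 := by ring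
    _ ≤ c₂ * B * (c₁ ^ 2 * A) := by gcongr
    _ = c₁ * (c₁ * c₂ * (A * B)) := by ring
    _ ≤ c₁ * ‖z‖ ^ 2 := by gcongr

theorem norm_mul_mul_le [IsProbabilityMeasure μt] (h : MasterSystem μ μt c₁ c₂ z u v)
    (hc₁ : 0 < c₁) (hc₂ : 0 < c₂) (hz : z ≠ 0) (hu : 0 < u.im)
    (hu_sq : ‖u‖ ^ 2 * ∫ t, ‖(t : ℂ) / (1 + u * t)‖ ^ 2 ∂μt ≤ c₁ / c₂) :
    ‖z‖ * ‖u‖ * ‖v‖ ≤ √(c₁ * c₂) := by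
  set B := ∫ t, ‖(t : ℂ) / (1 + u * t)‖ ^ 2 ∂μt
  have hB : 0 ≤ B := integral_nonneg fun _ ↦ by positivity
  have hzv : (‖z‖ * ‖v‖) ^ 2 ≤ c₂ ^ 2 * B := by
    have := pow_le_pow_left₀ (by positivity) (h.symm.norm_mul_le hc₂.le hz hu) 2
    rwa [mul_pow c₂, Real.sq_sqrt hB] at this
  rw [Real.le_sqrt (by positivity) (by positivity)]
  calc (‖z‖ * ‖u‖ * ‖v‖) ^ 2 = ‖u‖ ^ 2 * (‖z‖ * ‖v‖) ^ 2 := by ring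
    _ ≤ ‖u‖ ^ 2 * (c₂ ^ 2 * B) := by gcongr
    _ = c₂ ^ 2 * (‖u‖ ^ 2 * B) := by ring
    _ ≤ c₂ ^ 2 * (c₁ / c₂) := by gcongr
    _ = c₁ * c₂ := by field_simp

theorem exists_norm_le [IsProbabilityMeasure μ] [IsProbabilityMeasure μt] (hμ : μ (Iio 0) = 0)
    (hμt : μt ≠ Measure.dirac 0) (hc₁ : 0 < c₁) (hc₂ : 0 < c₂) {ε : ℝ} (hε : 0 < ε) :
    ∃ C, ∀ z u v : ℂ, 0 < z.im → 0 < u.im → 0 < v.im → ε ≤ ‖z‖ →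
      MasterSystem μ μt c₁ c₂ z u v → ‖u‖ ≤ C := by
  set q := μt.real {0}ᶜ
  have hq : 0 < q := measureReal_compl_singleton_pos hμt
  obtain ⟨δ, hδ, hsmall⟩ := exists_norm_mul_integral_le_of_norm_le μ (c₂ / c₁)
    (η := c₂ * q / (4 * c₁)) (by positivity)
  obtain ⟨R, hlarge⟩ :=
    exists_norm_mul_integral_sub_le_of_le_norm μt (c₁ / c₂) (η := q / 2) (by positivity)
  refine ⟨max R (√(c₁ * c₂) / (ε * δ)), fun z u v hz hu hv hzε h ↦ le_of_not_gt fun hC ↦ ?_⟩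
  have hz0 : z ≠ 0 := fun h ↦ by simp [h] at hz
  have hN := h.mul_le_normSq hμ hc₁.le hz hu hv
  have hu_sq := h.sq_norm_mul_integral_le hc₁ hc₂ hz0 hv hN
  have hv_sq := h.symm.sq_norm_mul_integral_le hc₂ hc₁ hz0 hu (by linarith)
  have hv_small : ‖v‖ ≤ δ := by
    have hprod := h.norm_mul_mul_le hc₁ hc₂ hz0 hu hu_sq
    have hCu : √(c₁ * c₂) < ‖u‖ * (ε * δ) :=
      (div_lt_iff₀ (by positivity)).mp ((le_max_right _ _).trans_lt hC)
    have hεzuv : ε * ‖u‖ * ‖v‖ ≤ ‖z‖ * ‖u‖ * ‖v‖ := by gcongr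
    have hu0 : 0 < ‖u‖ := norm_pos_iff.mpr fun h ↦ by simp [h] at hu
    exact le_of_mul_le_mul_left (by linarith) (mul_pos hε hu0)
  have hv_int : c₁ * ‖v * ∫ t, (t : ℂ) / (1 + v * t) ∂μ‖ ≤ c₂ * (q / 4) :=
    calc _ ≤ c₁ * (c₂ * q / (4 * c₁)) :=
          mul_le_mul_of_nonneg_left (hsmall v hv hv_small hv_sq) hc₁.le
      _ = c₂ * (q / 4) := by field_simp
  have hu_int : q / 2 ≤ ‖u * ∫ t, (t : ℂ) / (1 + u * t) ∂μt‖ := by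
    have h' := norm_sub_norm_le (q : ℂ) (u * ∫ t, (t : ℂ) / (1 + u * t) ∂μt)
    rw [norm_sub_rev, Complex.norm_real, Real.norm_of_nonneg hq.le] at h'
    linarith [hlarge u hu ((le_max_left _ _).trans hC.le) hu_sq]
  rw [h.norm_mul_integral_eq hc₁.le hc₂.le hz0] at hv_int
  linarith [le_of_mul_le_mul_left hv_int hc₂]

end MasterSystem

theorem IsPair.masterSystem {ν νt : Measure ℝ} {c : ℝ} {z d dt : ℂ} (h : IsPair ν νt c z d dt) :
    MasterSystem ν νt c 1 z d dt :=
  ⟨h.2.2.1, by simpa using h.2.2.2⟩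

theorem stmt6 (ν νt : Measure ℝ) [IsProbabilityMeasure ν] [IsProbabilityMeasure νt]
    (hνpos : ν (Set.Iio (0 : ℝ)) = 0) (hνtpos : νt (Set.Iio (0 : ℝ)) = 0)
    (hν0 : ν ≠ Measure.dirac 0) (hνt0 : νt ≠ Measure.dirac 0)
    (c : ℝ) (hc : 0 < c)
    (δ δt : ℂ → ℂ) (hsol : ∀ z ∈ UpperHalf, IsPair ν νt c z (δ z) (δt z)) :
    ∀ R : Set ℂ, R ⊆ UpperHalf → Bornology.IsBounded R →
      (∃ ε > (0 : ℝ), ∀ z ∈ R, ε ≤ |z.re|) →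
      (∃ M : ℝ, ∀ z ∈ R, ‖δ z‖ ≤ M) ∧
      (∃ M : ℝ, ∀ z ∈ R, ‖δt z‖ ≤ M) := by
  rintro R hR - ⟨ε, hε, hεR⟩
  have hzε : ∀ z ∈ R, ε ≤ ‖z‖ := fun z hz ↦ (hεR z hz).trans (Complex.abs_re_le_norm z)
  obtain ⟨C, hC⟩ := MasterSystem.exists_norm_le hνpos hνt0 hc one_pos hε
  obtain ⟨Ct, hCt⟩ := MasterSystem.exists_norm_le hνtpos hν0 one_pos hc hε
  refine ⟨⟨C, fun z hz ↦ ?_⟩, ⟨Ct, fun z hz ↦ ?_⟩⟩ <;>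
    obtain ⟨hd, hdt, -⟩ := hsol z (hR hz)
  · exact hC z _ _ (hR hz) hd hdt (hzε z hz) (hsol z (hR hz)).masterSystem
  · exact hCt z _ _ (hR hz) hdt hd (hzε z hz) (hsol z (hR hz)).masterSystem.symm
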